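/- Let T be a partial isometry on H with block form [[A, 0], [B, 0]] relative to H = H₁ ⊕ H₂ where H₁ = (ker T)^⊥ and H₂ = ker T, with closure of ran B equal to H₂. Let B = V|B| be the polar decomposition and K a conjugation on H₁ with KA = A*K. Then the conjugate-linear block operator C = [[AK, KB*], [BK, −VA*KV*]] satisfies C² = I and is isometric, i.e., C is a conjugation on H, and T = CJ|T| where J = K ⊕ 0. -/

import Mathlib

noncomputable section

open ContinuousLinearMap

def IsConjugation {H : Type*} [NormedAddCommGroup H] [InnerProductSpace ℂ H]
    (C : H → H) : Prop :=
  (∀ x y, C (x + y) = C x + C y) ∧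
  (∀ (a : ℂ) (x : H), C (a • x) = (starRingEnd ℂ) a • C x) ∧
  (∀ x, C (C x) = x) ∧
  (∀ x y : H, (inner ℂ (C x) (C y) : ℂ) = inner ℂ y x)

/-!
With `S = K R K` one has `S² = K (1 - A*A) K = 1 - AA*`, and the square roots intertwine:
`S A = A R`. So `[[A, S], [R, -A*]]` is the (unitary) Julia operator of the contraction `A`, and
since `K B* = K R V* = S K V*`, the operator `C` factors as
`(1 ⊕ V) ∘ [[A, S], [R, -A*]] ∘ (K ⊕ K V*)`. Here `V*` is an isometry, and `V*V` fixes the second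
component of `[[A, S], [R, -A*]] (K ⊕ K V*)`: density of `ran B` gives `ker V = ker R`, which
`A* K` preserves. Hence `C` is antiunitary, and `C² = 1` because conjugating the Julia operator
by `K ⊕ K` gives its adjoint `[[A*, R], [S, -A]]`.
-/

open scoped ComplexOrder InnerProductSpace

theorem Commute.of_sq_right {A : Type*} [CStarAlgebra A] [PartialOrder A] [StarOrderedRing A]
    {a b : A} (ha : 0 ≤ a) (h : Commute b (a ^ 2)) : Commute b a := by
  rw [← CFC.sqrt_sq a, CFC.sqrt_eq_cfc]
  exact (h.symm.cfc_nnreal _).symm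

namespace IsConjugation

variable {H : Type*} [NormedAddCommGroup H] [InnerProductSpace ℂ H] {K : H → H}

theorem map_add (hK : IsConjugation K) (x y : H) : K (x + y) = K x + K y := hK.1 x y

theorem map_smul (hK : IsConjugation K) (a : ℂ) (x : H) :
    K (a • x) = (starRingEnd ℂ) a • K x := hK.2.1 a x

theorem apply_apply (hK : IsConjugation K) (x : H) : K (K x) = x := hK.2.2.1 x

theorem inner_map_map (hK : IsConjugation K) (x y : H) : ⟪K x, K y⟫_ℂ = ⟪y, x⟫_ℂ :=
  hK.2.2.2 x y

theorem inner_map_right (hK : IsConjugation K) (x y : H) : ⟪x, K y⟫_ℂ = ⟪y, K x⟫_ℂ := by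
  simpa only [hK.apply_apply] using hK.inner_map_map (K x) y

theorem map_zero (hK : IsConjugation K) : K 0 = 0 := by
  simpa using hK.map_add 0 0

theorem map_sub (hK : IsConjugation K) (x y : H) : K (x - y) = K x - K y :=
  eq_sub_of_add_eq (by rw [← hK.map_add, sub_add_cancel])

theorem norm_map (hK : IsConjugation K) (x : H) : ‖K x‖ = ‖x‖ := by
  rw [norm_eq_sqrt_re_inner (𝕜 := ℂ), norm_eq_sqrt_re_inner (𝕜 := ℂ), hK.inner_map_map]

def conjugate (hK : IsConjugation K) : (H →L[ℂ] H) →+* (H →L[ℂ] H) where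
  toFun T := LinearMap.mkContinuous
    { toFun := fun x => K (T (K x))
      map_add' := fun x y => by simp only [hK.map_add, T.map_add]
      map_smul' := fun c x => by simp [hK.map_smul] }
    ‖T‖ fun x => by simpa [hK.norm_map] using T.le_opNorm (K x)
  map_one' := by ext; simp [hK.apply_apply]
  map_mul' _ _ := by ext; simp [hK.apply_apply]
  map_zero' := by ext; simp [hK.map_zero]
  map_add' _ _ := by ext; simp [hK.map_add]

@[simp]
theorem conjugate_apply (hK : IsConjugation K) (T : H →L[ℂ] H) (x : H) :
    hK.conjugate T x = K (T (K x)) := rfl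

theorem map_apply (hK : IsConjugation K) (T : H →L[ℂ] H) (x : H) :
    K (T x) = hK.conjugate T (K x) := by
  simp [hK.apply_apply]

theorem conjugate_conjugate (hK : IsConjugation K) (T : H →L[ℂ] H) :
    hK.conjugate (hK.conjugate T) = T := by
  ext; simp [hK.apply_apply]

theorem conjugate_adjoint [CompleteSpace H] (hK : IsConjugation K) (T : H →L[ℂ] H) :
    hK.conjugate (adjoint T) = adjoint (hK.conjugate T) := by
  refine (eq_adjoint_iff _ _).mpr fun x y => ?_
  simp only [conjugate_apply]
  rw [← hK.inner_map_map, hK.apply_apply, adjoint_inner_right, hK.inner_map_right]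

theorem isPositive_conjugate (hK : IsConjugation K) {T : H →L[ℂ] H} (hT : T.IsPositive) :
    (hK.conjugate T).IsPositive := by
  rw [isPositive_iff]
  refine ⟨fun x y => ?_, fun x => ?_⟩
  · simp only [coe_coe, conjugate_apply]
    rw [← hK.inner_map_map, hK.apply_apply, ← hT.inner_left_eq_inner_right, hK.inner_map_right]
  · simpa [← hK.inner_map_map (T (K x)), hK.apply_apply] using hT.inner_nonneg_right (K x)

end IsConjugation

section Operators

variable {E F : Type*} [NormedAddCommGroup E] [InnerProductSpace ℂ E] [CompleteSpace E]
  [NormedAddCommGroup F] [InnerProductSpace ℂ F] [CompleteSpace F]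
  {A V : E →L[ℂ] F} {R : E →L[ℂ] E} {S : F →L[ℂ] F}

theorem ContinuousLinearMap.IsPositive.comp_eq_comp_of_sq (hR : R.IsPositive) (hS : S.IsPositive)
    (h : S ∘L S ∘L A = A ∘L R ∘L R) : S ∘L A = A ∘L R := by
  -- `X = R ⊕ S` commutes with `M = [[0, 0], [A, 0]]` because `X²` does.
  let e := WithLp.prodContinuousLinearEquiv 2 ℂ E F
  let X : WithLp 2 (E × F) →L[ℂ] WithLp 2 (E × F) :=
    e.symm.toContinuousLinearMap ∘L R.prodMap S ∘L e.toContinuousLinearMap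
  let M : WithLp 2 (E × F) →L[ℂ] WithLp 2 (E × F) :=
    e.symm.toContinuousLinearMap ∘L (inr ℂ E F ∘L A ∘L fst ℂ E F) ∘L e.toContinuousLinearMap
  have hX (x) : X x = WithLp.toLp 2 (R x.fst, S x.snd) := rfl
  have hM (x) : M x = WithLp.toLp 2 (0, A x.fst) := by simp [M, e]
  have hXpos : 0 ≤ X := by
    rw [nonneg_iff_isPositive, isPositive_iff]
    refine ⟨fun x y => ?_, fun x => ?_⟩
    · simp [hX, WithLp.prod_inner_apply, hR.inner_left_eq_inner_right,
        hS.inner_left_eq_inner_right]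
    · simpa [hX, WithLp.prod_inner_apply] using
        add_nonneg (hR.inner_nonneg_left x.fst) (hS.inner_nonneg_left x.snd)
  have hcomm : Commute M (X ^ 2) := by
    ext x : 1
    have := congr($h x.fst)
    simp only [comp_apply] at this
    simp [sq, hX, hM, this]
  ext x
  simpa [hX, hM] using congr(($((hcomm.of_sq_right hXpos).symm.eq) (WithLp.toLp 2 (x, 0))).snd)

-- The Julia operator `[[A, S], [R, -A†]] : E ⊕ F → F ⊕ E` is an isometry with right inverse
-- `[[A†, R], [S, -A]]`.
theorem julia_inner_eq (hR : IsSelfAdjoint R) (hS : IsSelfAdjoint S)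
    (hAR : adjoint A ∘L A + R ∘L R = 1) (hAS : A ∘L adjoint A + S ∘L S = 1)
    (hSA : S ∘L A = A ∘L R) (y y' : E) (w w' : F) :
    ⟪A y + S w, A y' + S w'⟫_ℂ + ⟪R y - adjoint A w, R y' - adjoint A w'⟫_ℂ =
      ⟪y, y'⟫_ℂ + ⟪w, w'⟫_ℂ := by
  have hRs (x x' : E) : ⟪R x, x'⟫_ℂ = ⟪x, R x'⟫_ℂ := hR.isSymmetric x x'
  have hSs (v v' : F) : ⟪S v, v'⟫_ℂ = ⟪v, S v'⟫_ℂ := hS.isSymmetric v v'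
  have hSA_pt (x : E) : S (A x) = A (R x) := congr($hSA x)
  have hE : ⟪A y, A y'⟫_ℂ + ⟪R y, R y'⟫_ℂ = ⟪y, y'⟫_ℂ := by
    simpa [← adjoint_inner_right A, hRs, inner_add_right] using congr(⟪y, $hAR y'⟫_ℂ)
  have hF : ⟪S w, S w'⟫_ℂ + ⟪adjoint A w, adjoint A w'⟫_ℂ = ⟪w, w'⟫_ℂ := by
    simpa [adjoint_inner_left, hSs, inner_add_right, add_comm] using congr(⟪w, $hAS w'⟫_ℂ)
  have h₁ : ⟪A y, S w'⟫_ℂ = ⟪R y, adjoint A w'⟫_ℂ := by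
    rw [← hSs, hSA_pt, adjoint_inner_right]
  have h₂ : ⟪S w, A y'⟫_ℂ = ⟪adjoint A w, R y'⟫_ℂ := by
    rw [hSs, hSA_pt, adjoint_inner_left]
  simp only [inner_add_left, inner_add_right, inner_sub_left, inner_sub_right]
  linear_combination hE + hF + h₁ + h₂

theorem julia_comp_adjoint_fst (hAS : A ∘L adjoint A + S ∘L S = 1) (hSA : S ∘L A = A ∘L R)
    (a : F) (b : E) : A (adjoint A a + R b) + S (S a - A b) = a := by
  have h₁ : A (adjoint A a) + S (S a) = a := congr($hAS a)
  have h₂ : S (A b) = A (R b) := congr($hSA b)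
  simp only [map_add, map_sub, h₂]
  linear_combination (norm := abel_nf) h₁

theorem julia_comp_adjoint_snd (hR : IsSelfAdjoint R) (hS : IsSelfAdjoint S)
    (hAR : adjoint A ∘L A + R ∘L R = 1) (hSA : S ∘L A = A ∘L R)
    (a : F) (b : E) : R (adjoint A a + R b) - adjoint A (S a - A b) = b := by
  have h₁ : adjoint A (A b) + R (R b) = b := congr($hAR b)
  have h₂ : adjoint A (S a) = R (adjoint A a) := by
    simpa [adjoint_comp, hR.adjoint_eq, hS.adjoint_eq] using congr($(congr(adjoint $hSA)) a)
  simp only [map_add, map_sub, h₂]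
  linear_combination (norm := abel_nf) h₁

theorem adjoint_apply_apply_of_mem_orthogonal_ker (hVV : V ∘L adjoint V = 1) {w : E}
    (hw : w ∈ V.kerᗮ) : adjoint V (V w) = w := by
  set d := w - adjoint V (V w)
  have hd : V d = 0 := by simp [d, show V (adjoint V (V w)) = V w from congr($hVV (V w))]
  have hdd : ⟪d, d⟫_ℂ = 0 := by
    rw [inner_sub_right, (Submodule.mem_orthogonal _ _).mp hw d hd, adjoint_inner_right, hd,
      inner_zero_left, sub_zero]
  exact (sub_eq_zero.mp (inner_self_eq_zero.mp hdd)).symm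

theorem ker_le_ker_of_adjoint_comp_comp_eq (hR : IsSelfAdjoint R)
    (hPR : adjoint V ∘L V ∘L R = R) : V.ker ≤ R.ker := by
  intro u hu
  have hRP : (R ∘L adjoint V) ∘L V = R := by
    simpa [adjoint_comp, hR.adjoint_eq] using congr(adjoint $hPR)
  simpa [show V u = 0 from hu] using congr($hRP u).symm

theorem ker_le_ker_of_denseRange (hR : IsSelfAdjoint R) (hPR : adjoint V ∘L V ∘L R = R)
    (hdense : DenseRange (V ∘L R)) : R.ker ≤ V.ker := by
  intro u hu
  rw [LinearMap.mem_ker, coe_coe]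
  refine hdense.eq_zero_of_inner_left ℂ fun t => ?_
  rw [comp_apply, ← adjoint_inner_right, show adjoint V (V (R t)) = R t from congr($hPR t),
    ← adjoint_inner_left, hR.adjoint_eq, show R u = 0 from hu, inner_zero_left]

end Operators

section BlockConjugation

variable {H₁ H₂ : Type*} [NormedAddCommGroup H₁] [InnerProductSpace ℂ H₁] [CompleteSpace H₁]
  [NormedAddCommGroup H₂] [InnerProductSpace ℂ H₂] [CompleteSpace H₂]

def juliaConjugation (A R S : H₁ →L[ℂ] H₁) (V : H₁ →L[ℂ] H₂) (K : H₁ → H₁)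
    (x : WithLp 2 (H₁ × H₂)) : WithLp 2 (H₁ × H₂) :=
  WithLp.toLp 2 (A (K x.fst) + S (K (adjoint V x.snd)),
    V (R (K x.fst) - adjoint A (K (adjoint V x.snd))))

variable {A R S : H₁ →L[ℂ] H₁} {V : H₁ →L[ℂ] H₂} {K : H₁ → H₁}

theorem IsConjugation.conjugate_comp_eq_comp_of_sq (hK : IsConjugation K)
    (hKA : hK.conjugate A = adjoint A) (hR : R.IsPositive) (hR2 : R ∘L R = 1 - adjoint A ∘L A) :
    hK.conjugate R ∘L A = A ∘L R := by
  refine hR.comp_eq_comp_of_sq (hK.isPositive_conjugate hR) ?_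
  change R * R = 1 - adjoint A * A at hR2
  have hS2 : hK.conjugate R * hK.conjugate R = 1 - A * adjoint A := by
    rw [← map_mul, hR2, _root_.map_sub, map_one, map_mul, hK.conjugate_adjoint, hKA,
      adjoint_adjoint]
  change hK.conjugate R * (hK.conjugate R * A) = A * (R * R)
  rw [← mul_assoc, hS2, hR2]
  noncomm_ring

theorem IsConjugation.adjoint_apply_map_adjoint_mem_orthogonal_ker (hK : IsConjugation K)
    (hKA : hK.conjugate A = adjoint A) (hR : IsSelfAdjoint R)
    (hSA : hK.conjugate R ∘L A = A ∘L R) (hVR : V.ker ≤ R.ker) (hRV : R.ker ≤ V.ker) (z : H₂) :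
    adjoint A (K (adjoint V z)) ∈ V.kerᗮ := by
  rw [Submodule.mem_orthogonal]
  intro u hu
  have hAS : adjoint A ∘L hK.conjugate R = R ∘L adjoint A := by
    simpa [adjoint_comp, ← hK.conjugate_adjoint, hR.adjoint_eq] using congr(adjoint $hSA)
  have hRAK : R (adjoint A (K u)) = 0 := by
    rw [← comp_apply R, ← hAS, comp_apply, conjugate_apply, hK.apply_apply,
      show R u = 0 from hVR hu, hK.map_zero, (adjoint A).map_zero]
  have hVAK : V (adjoint A (K u)) = 0 := hRV hRAK
  rw [adjoint_inner_right, hK.inner_map_right (A u), hK.map_apply A, hKA, adjoint_inner_left V,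
    hVAK, inner_zero_right]

theorem isConjugation_juliaConjugation (hK : IsConjugation K)
    (hKA : hK.conjugate A = adjoint A) (hKR : hK.conjugate R = S) (hR : IsSelfAdjoint R)
    (hAR : adjoint A ∘L A + R ∘L R = 1) (hSA : S ∘L A = A ∘L R)
    (hVV : V ∘L adjoint V = 1) (hPR : adjoint V ∘L V ∘L R = R)
    (hPA : ∀ z, adjoint V (V (adjoint A (K (adjoint V z)))) = adjoint A (K (adjoint V z))) :
    IsConjugation (juliaConjugation A R S V K) := by
  have hS : IsSelfAdjoint S := by
    rw [← hKR, IsSelfAdjoint, star_eq_adjoint, ← hK.conjugate_adjoint, hR.adjoint_eq]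
  have hAS : A ∘L adjoint A + S ∘L S = 1 := by
    have := congr(hK.conjugate $hAR)
    rwa [map_add, ← mul_def, ← mul_def, map_mul, map_mul, map_one, hK.conjugate_adjoint, hKA,
      adjoint_adjoint, hKR] at this
  have hKA_pt (u : H₁) : K (A u) = adjoint A (K u) := by rw [hK.map_apply, hKA]
  have hKAdj_pt (u : H₁) : K (adjoint A u) = A (K u) := by
    rw [hK.map_apply, hK.conjugate_adjoint, hKA, adjoint_adjoint]
  have hKR_pt (u : H₁) : K (R u) = S (K u) := by rw [hK.map_apply, hKR]
  have hKS_pt (u : H₁) : K (S u) = R (K u) := by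
    rw [hK.map_apply, ← hKR, hK.conjugate_conjugate]
  have hVV_pt (z : H₂) : V (adjoint V z) = z := congr($hVV z)
  have hP (y : H₁) (z : H₂) : adjoint V (V (R y - adjoint A (K (adjoint V z)))) =
      R y - adjoint A (K (adjoint V z)) := by
    rw [map_sub, map_sub, hPA, show adjoint V (V (R y)) = R y from congr($hPR y)]
  refine ⟨fun x y => ?_, fun c x => ?_, fun x => ?_, fun x y => ?_⟩
  · simp only [juliaConjugation, WithLp.add_fst, WithLp.add_snd, map_add, hK.map_add, map_sub,
      ← WithLp.toLp_add, Prod.mk_add_mk]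
    congr 2 <;> abel
  · refine (WithLp.ext_iff 2).2 (Prod.ext ?_ ?_) <;>
      simp [juliaConjugation, hK.map_smul, smul_sub]
  · have hKa : K (A (K x.fst) + S (K (adjoint V x.snd))) =
        adjoint A x.fst + R (adjoint V x.snd) := by
      rw [hK.map_add, hKA_pt, hKS_pt, hK.apply_apply, hK.apply_apply]
    have hKc : K (R (K x.fst) - adjoint A (K (adjoint V x.snd))) =
        S x.fst - A (adjoint V x.snd) := by
      rw [hK.map_sub, hKR_pt, hKAdj_pt, hK.apply_apply, hK.apply_apply]
    simp only [juliaConjugation, WithLp.toLp_fst, WithLp.toLp_snd, hP, hKa, hKc,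
      julia_comp_adjoint_fst hAS hSA, julia_comp_adjoint_snd hR hS hAR hSA, hVV_pt]
    rfl
  · simp only [juliaConjugation, WithLp.prod_inner_apply]
    rw [← adjoint_inner_left, hP, julia_inner_eq hR hS hAR hAS hSA, hK.inner_map_map,
      hK.inner_map_map, adjoint_inner_right, hVV_pt]
    rfl

end BlockConjugation

theorem conjugation_block_construction_general
    {H₁ H₂ : Type*} [NormedAddCommGroup H₁] [InnerProductSpace ℂ H₁] [CompleteSpace H₁]
    [NormedAddCommGroup H₂] [InnerProductSpace ℂ H₂] [CompleteSpace H₂]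
    (A : H₁ →L[ℂ] H₁) (B : H₁ →L[ℂ] H₂)
    (hBdense : Dense (Set.range B))
    (R : H₁ →L[ℂ] H₁) (hR : R.IsPositive) (hR2 : R ∘L R = 1 - adjoint A ∘L A)
    (V : H₁ →L[ℂ] H₂) (hpolar : B = V ∘L R) (hVB : adjoint V ∘L B = R)
    (hVV : V ∘L adjoint V = 1)
    (K : H₁ → H₁) (hK : IsConjugation K)
    (hKA : ∀ x, K (A x) = adjoint A (K x))
    (T : WithLp 2 (H₁ × H₂) →L[ℂ] WithLp 2 (H₁ × H₂))
    (hT : ∀ x, T x = (WithLp.equiv 2 (H₁ × H₂)).symm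
      (A ((WithLp.equiv 2 (H₁ × H₂)) x).1, B ((WithLp.equiv 2 (H₁ × H₂)) x).1))
    (C : WithLp 2 (H₁ × H₂) → WithLp 2 (H₁ × H₂))
    (hC : ∀ x, C x = (WithLp.equiv 2 (H₁ × H₂)).symm
      (A (K ((WithLp.equiv 2 (H₁ × H₂)) x).1) +
         K (adjoint B ((WithLp.equiv 2 (H₁ × H₂)) x).2),
       B (K ((WithLp.equiv 2 (H₁ × H₂)) x).1) -
         V (adjoint A (K (adjoint V ((WithLp.equiv 2 (H₁ × H₂)) x).2)))))
    (J : WithLp 2 (H₁ × H₂) → WithLp 2 (H₁ × H₂))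
    (hJ : ∀ x, J x = (WithLp.equiv 2 (H₁ × H₂)).symm
      (K ((WithLp.equiv 2 (H₁ × H₂)) x).1, 0))
    (Tabs : WithLp 2 (H₁ × H₂) →L[ℂ] WithLp 2 (H₁ × H₂))
    (hTabs : ∀ x, Tabs x = (WithLp.equiv 2 (H₁ × H₂)).symm
      (((WithLp.equiv 2 (H₁ × H₂)) x).1, 0)) :
    IsConjugation C ∧ ∀ x, T x = C (J (Tabs x)) := by
  have hKA' : hK.conjugate A = adjoint A := by ext x; simp [hKA, hK.apply_apply]
  have hAR : adjoint A ∘L A + R ∘L R = 1 := by rw [hR2, add_sub_cancel]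
  have hSA := hK.conjugate_comp_eq_comp_of_sq hKA' hR hR2
  have hPR : adjoint V ∘L V ∘L R = R := by rw [← hpolar, hVB]
  have hVR := ker_le_ker_of_adjoint_comp_comp_eq hR.isSelfAdjoint hPR
  have hRV := ker_le_ker_of_denseRange hR.isSelfAdjoint hPR (hpolar ▸ hBdense)
  have hPA (z : H₂) := adjoint_apply_apply_of_mem_orthogonal_ker hVV
    (hK.adjoint_apply_map_adjoint_mem_orthogonal_ker hKA' hR.isSelfAdjoint hSA hVR hRV z)
  have hCeq : C = juliaConjugation A R (hK.conjugate R) V K := by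
    funext x
    rw [hC, hpolar, adjoint_comp, hR.isSelfAdjoint.adjoint_eq, comp_apply, comp_apply,
      hK.map_apply R, ← V.map_sub]
    rfl
  refine ⟨hCeq ▸ isConjugation_juliaConjugation hK hKA' rfl hR.isSelfAdjoint hAR hSA hVV hPR
    hPA, fun x => ?_⟩
  rw [hT, hJ, hTabs, hC]
  simp [hK.apply_apply, hK.map_zero]

/-- For a partial isometry with block form `[[A, 0], [B, 0]]` relative to
`H = H₁ ⊕ H₂` (so `A*A + B*B = 1`), with `ran B` dense in `H₂`, polar
decomposition `B = V|B|` (where `|B| = √(I − A*A)` is the positive operator `R`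
with `R² = 1 − A*A`, and `V*B = |B|`, `VV* = 1` since the final space of `V` is
`H₂`), and `K` a conjugation on `H₁` with `KA = A*K`, the conjugate-linear
block operator `C = [[AK, KB*], [BK, −VA*KV*]]` is a conjugation on `H`
(additive, conjugate-homogeneous, involutive, and isometric), and
`T = C J |T|` with `J = K ⊕ 0` and `|T| = I_{H₁} ⊕ 0`. -/
theorem conjugation_block_construction
    {H₁ H₂ : Type*} [NormedAddCommGroup H₁] [InnerProductSpace ℂ H₁] [CompleteSpace H₁]
    [NormedAddCommGroup H₂] [InnerProductSpace ℂ H₂] [CompleteSpace H₂]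
    (A : H₁ →L[ℂ] H₁) (B : H₁ →L[ℂ] H₂)
    (hAB : adjoint A ∘L A + adjoint B ∘L B = 1)
    (hBdense : Dense (Set.range B))
    (R : H₁ →L[ℂ] H₁) (hR : R.IsPositive) (hR2 : R ∘L R = 1 - adjoint A ∘L A)
    (V : H₁ →L[ℂ] H₂) (hpolar : B = V ∘L R) (hVB : adjoint V ∘L B = R)
    (hVV : V ∘L adjoint V = 1)
    (K : H₁ → H₁) (hK : IsConjugation K)
    (hKA : ∀ x, K (A x) = adjoint A (K x))
    (T : WithLp 2 (H₁ × H₂) →L[ℂ] WithLp 2 (H₁ × H₂))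
    (hT : ∀ x, T x = (WithLp.equiv 2 (H₁ × H₂)).symm
      (A ((WithLp.equiv 2 (H₁ × H₂)) x).1, B ((WithLp.equiv 2 (H₁ × H₂)) x).1))
    (C : WithLp 2 (H₁ × H₂) → WithLp 2 (H₁ × H₂))
    (hC : ∀ x, C x = (WithLp.equiv 2 (H₁ × H₂)).symm
      (A (K ((WithLp.equiv 2 (H₁ × H₂)) x).1) +
         K (adjoint B ((WithLp.equiv 2 (H₁ × H₂)) x).2),
       B (K ((WithLp.equiv 2 (H₁ × H₂)) x).1) -
         V (adjoint A (K (adjoint V ((WithLp.equiv 2 (H₁ × H₂)) x).2)))))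
    (J : WithLp 2 (H₁ × H₂) → WithLp 2 (H₁ × H₂))
    (hJ : ∀ x, J x = (WithLp.equiv 2 (H₁ × H₂)).symm
      (K ((WithLp.equiv 2 (H₁ × H₂)) x).1, 0))
    (Tabs : WithLp 2 (H₁ × H₂) →L[ℂ] WithLp 2 (H₁ × H₂))
    (hTabs : ∀ x, Tabs x = (WithLp.equiv 2 (H₁ × H₂)).symm
      (((WithLp.equiv 2 (H₁ × H₂)) x).1, 0)) :
    IsConjugation C ∧ ∀ x, T x = C (J (Tabs x)) :=
  conjugation_block_construction_general A B hBdense R hR hR2 V hpolar hVB hVV K hK hKA T hT C hC J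
    hJ Tabs hTabs
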